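/- arXiv:2503.15765 — 2 statements merged into one kernel-verified Lean document; each statement's English description precedes it below -/
import Mathlib

section
/- Let $\hat{\lambda}$ be an eigenvalue of a holomorphic matrix family $T : D \to \mathbb{C}^{n \times n}$ that is algebraically simple, meaning $\det T(\hat\lambda) = 0$ and $\frac{d}{d\lambda} \det T(\lambda)\big|_{\lambda = \hat\lambda} \neq 0$. Then $\hat\lambda$ is geometrically simple, i.e., $\dim \ker T(\hat\lambda) = 1$. -/
/-!
If `ker T(λ̂)` has dimension at least two, it meets every hyperplane nontrivially, so
replacing a row of `T(λ̂)` by any vector leaves a singular matrix; hence `adj T(λ̂) = 0`.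
Differentiating `T · adj T = det T • 1` at `λ̂` then gives
`T(λ̂) · (adj T)'(λ̂) = (det T)'(λ̂) • 1`, and taking determinants yields
`0 = ((det T)'(λ̂))ⁿ`, contradicting algebraic simplicity.
-/

open Matrix Module

section Adjugate

variable {ι K : Type*} [Fintype ι] [DecidableEq ι] [Field K]

theorem Submodule.exists_ne_zero_apply_eq_zero {V : Type*} [AddCommGroup V] [Module K V]
    {W : Submodule K V} [FiniteDimensional K W] (hW : 1 < finrank K W) (f : V →ₗ[K] K) :
    ∃ x ∈ W, x ≠ 0 ∧ f x = 0 := by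
  have hker : LinearMap.ker (f.domRestrict W) ≠ ⊥ :=
    LinearMap.ker_ne_bot_of_finrank_lt (by rwa [finrank_self])
  obtain ⟨⟨x, hxW⟩, hx, hx0⟩ := Submodule.exists_mem_ne_zero_of_ne_bot hker
  exact ⟨x, hxW, fun h => hx0 (Subtype.ext h), hx⟩

theorem Matrix.det_updateRow_eq_zero_of_one_lt_finrank_ker {A : Matrix ι ι K}
    (hA : 1 < finrank K (LinearMap.ker A.mulVecLin)) (j : ι) (b : ι → K) :
    (A.updateRow j b).det = 0 := by
  obtain ⟨x, hxA, hx0, hbx⟩ :=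
    Submodule.exists_ne_zero_apply_eq_zero hA (dotProductBilin K K b)
  rw [LinearMap.mem_ker, mulVecLin_apply] at hxA
  rw [dotProductBilin_apply_apply] at hbx
  exact exists_mulVec_eq_zero_iff.mp ⟨x, hx0, by simp [updateRow_mulVec, hxA, hbx]⟩

theorem Matrix.adjugate_eq_zero_of_one_lt_finrank_ker {A : Matrix ι ι K}
    (hA : 1 < finrank K (LinearMap.ker A.mulVecLin)) : adjugate A = 0 := by
  ext k j
  rw [adjugate_apply, det_updateRow_eq_zero_of_one_lt_finrank_ker hA, zero_apply]

end Adjugate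

section Derivative

variable {𝕜 ι E : Type*} [NontriviallyNormedField 𝕜] [Fintype ι] [DecidableEq ι]
  [NormedAddCommGroup E] [NormedSpace 𝕜 E]

theorem differentiableAt_det {M : E → Matrix ι ι 𝕜} {x : E}
    (hM : ∀ i j, DifferentiableAt 𝕜 (fun y => M y i j) x) :
    DifferentiableAt 𝕜 (fun y => (M y).det) x := by
  simp only [det_apply']
  fun_prop

theorem differentiableAt_adjugate_apply {M : E → Matrix ι ι 𝕜} {x : E}
    (hM : ∀ i j, DifferentiableAt 𝕜 (fun y => M y i j) x) (k j : ι) :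
    DifferentiableAt 𝕜 (fun y => adjugate (M y) k j) x := by
  simp only [adjugate_apply]
  refine differentiableAt_det fun a c => ?_
  rcases eq_or_ne a j with rfl | haj
  · simp
  · simpa [haj] using hM a c

theorem deriv_det_eq_zero_of_adjugate_eq_zero [Nonempty ι] {M : 𝕜 → Matrix ι ι 𝕜} {x : 𝕜}
    (hM : ∀ i j, DifferentiableAt 𝕜 (fun y => M y i j) x) (hadj : adjugate (M x) = 0) :
    deriv (fun y => (M y).det) x = 0 := by
  set c := deriv (fun y => (M y).det) x
  let D : Matrix ι ι 𝕜 := of fun k j => deriv (fun y => adjugate (M y) k j) x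
  have hMD : M x * D = c • 1 := by
    ext i j
    have hprod : (fun y => ∑ k, M y i k * adjugate (M y) k j) =
        fun y => (M y).det * (1 : Matrix ι ι 𝕜) i j := by
      funext y
      rw [← mul_apply, mul_adjugate, Matrix.smul_apply, smul_eq_mul]
    have hderiv := HasDerivAt.fun_sum (u := Finset.univ) fun k _ =>
      (hM i k).hasDerivAt.fun_mul (differentiableAt_adjugate_apply hM k j).hasDerivAt
    simp only [hadj, Matrix.zero_apply, mul_zero, zero_add, hprod] at hderiv
    rw [mul_apply, Matrix.smul_apply, smul_eq_mul,
      ((differentiableAt_det hM).hasDerivAt.mul_const _).unique hderiv]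
    rfl
  have hdet : (M x).det = 0 := by
    have h := mul_adjugate (M x)
    rw [hadj, Matrix.mul_zero, eq_comm, smul_eq_zero] at h
    exact h.resolve_right one_ne_zero
  have := congrArg det hMD
  rw [det_mul, hdet, zero_mul, det_smul, det_one, mul_one] at this
  exact pow_eq_zero_iff Fintype.card_ne_zero |>.mp this.symm

end Derivative

/-- an algebraically simple eigenvalue of a holomorphic matrix family is
geometrically simple: if `det T(λ̂) = 0` and `(det ∘ T)'(λ̂) ≠ 0`, then
`dim ker T(λ̂) = 1`. -/
theorem algebraically_simple_implies_geometrically_simple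
    {n : ℕ} (D : Set ℂ) (hD : IsOpen D)
    (T : ℂ → Matrix (Fin n) (Fin n) ℂ)
    (hT : ∀ i j, DifferentiableOn ℂ (fun lam => T lam i j) D)
    (lam : ℂ) (hlam : lam ∈ D)
    (h0 : (T lam).det = 0)
    (h1 : deriv (fun l => (T l).det) lam ≠ 0) :
    Module.finrank ℂ (LinearMap.ker (T lam).mulVecLin) = 1 := by
  have hTlam i j : DifferentiableAt ℂ (fun l => T l i j) lam :=
    (hT i j).differentiableAt (hD.mem_nhds hlam)
  have : NeZero n := ⟨by rintro rfl; simp at h0⟩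
  have hker : LinearMap.ker (T lam).mulVecLin ≠ ⊥ := by
    obtain ⟨v, hv0, hv⟩ := exists_mulVec_eq_zero_iff.mpr h0
    exact fun h => hv0 (ker_mulVecLin_eq_bot_iff.mp h v hv)
  have hpos := Submodule.one_le_finrank_iff.mpr hker
  have hle : finrank ℂ (LinearMap.ker (T lam).mulVecLin) ≤ 1 := not_lt.mp fun h2 =>
    h1 (deriv_det_eq_zero_of_adjugate_eq_zero hTlam (adjugate_eq_zero_of_one_lt_finrank_ker h2))
  omega
end

section
/- Let $T : D \to \mathbb{C}^{n \times n}$ be a holomorphic matrix family and $(\hat{y}, \hat{\lambda}, \hat{x})$ an eigentriplet: $T(\hat\lambda)\hat{x} = 0$, $T(\hat\lambda)^* \hat{y} = 0$ with $\hat x, \hat y \neq 0$. Then $\hat\lambda$ is algebraically simple (i.e., $\det T$ has a simple zero at $\hat\lambda$) if and only if $\hat\lambda$ is geometrically simple ($\dim\ker T(\hat\lambda) = 1$) and $\hat{y}^* T'(\hat{\lambda}) \hat{x} \neq 0$. -/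
/-!
By Jacobi's formula, `(det T)'(λ̂) = tr (T'(λ̂) · adj T(λ̂))`. If `dim ker T(λ̂) ≥ 2`, every
`(n-1)`-minor of `T(λ̂)` vanishes and `adj T(λ̂) = 0`. If `dim ker T(λ̂) = 1`, the columns of
`adj T(λ̂)` lie in `ker T(λ̂) = span x̂` and its rows in the left kernel `span ŷ*`, so
`adj T(λ̂) = α x̂ ŷ*` with `α ≠ 0`, and the derivative equals `α ŷ* T'(λ̂) x̂`.
-/

open Matrix Module LinearMap

theorem Submodule.eq_span_singleton_of_finrank_eq_one {K V : Type*} [DivisionRing K]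
    [AddCommGroup V] [Module K V] {S : Submodule K V} [FiniteDimensional K S] {x : V}
    (h : finrank K S = 1) (hx : x ∈ S) (hx0 : x ≠ 0) : S = K ∙ x :=
  (eq_of_le_of_finrank_le ((span_singleton_le_iff_mem x S).mpr hx)
    (by rw [h, finrank_span_singleton hx0])).symm

namespace Matrix

theorem det_updateRow_eq_vecMul_adjugate {R n : Type*} [CommRing R] [Fintype n]
    [DecidableEq n] (A : Matrix n n R) (i : n) (b : n → R) :
    (A.updateRow i b).det = (b ᵥ* A.adjugate) i := by
  rw [← cramer_transpose_apply, cramer_eq_adjugate_mulVec, ← adjugate_transpose,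
    mulVec_transpose]

theorem hasDerivAt_det {𝕜 n : Type*} [NontriviallyNormedField 𝕜] [Fintype n] [DecidableEq n]
    {T : 𝕜 → Matrix n n 𝕜} {T' : Matrix n n 𝕜} {t : 𝕜}
    (hT : ∀ i j, HasDerivAt (fun s ↦ T s i j) (T' i j) t) :
    HasDerivAt (fun s ↦ (T s).det) (trace (T' * (T t).adjugate)) t := by
  let D : ContinuousMultilinearMap 𝕜 (fun _ : n ↦ n → 𝕜) 𝕜 :=
    { toMultilinearMap := (detRowAlternating : (n → 𝕜) [⋀^n]→ₗ[𝕜] 𝕜).toMultilinearMap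
      cont := (continuous_id.matrix_det : Continuous fun M : Matrix n n 𝕜 ↦ M.det) }
  have hrows : ∀ i, HasFDerivAt (fun s ↦ T s i) ((1 : 𝕜 →L[𝕜] 𝕜).smulRight (T' i)) t :=
    fun i ↦ (hasDerivAt_pi.2 (hT i)).hasFDerivAt
  refine (HasFDerivAt.multilinear_comp (f := D) hrows).hasDerivAt.congr_deriv ?_
  simp only [D, trace, diag_apply, _root_.sum_apply, ContinuousLinearMap.comp_apply,
    ContinuousLinearMap.smulRight_apply, one_apply_eq_self, one_smul,
    ContinuousMultilinearMap.toContinuousLinearMap_apply]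
  exact Finset.sum_congr rfl fun i _ ↦ det_updateRow_eq_vecMul_adjugate (T t) i (T' i)

theorem trace_mul_smul_vecMulVec {R n : Type*} [CommRing R] [Fintype n] (B : Matrix n n R)
    (α : R) (x w : n → R) : trace (B * (α • vecMulVec x w)) = α * (w ⬝ᵥ B *ᵥ x) := by
  rw [Matrix.mul_smul, trace_smul, mul_vecMulVec, trace_vecMulVec, dotProduct_comm, smul_eq_mul]

theorem finrank_ker_mulVecLin_transpose {K n : Type*} [Field K] [Fintype n]
    (A : Matrix n n K) :
    finrank K (ker Aᵀ.mulVecLin) = finrank K (ker A.mulVecLin) := by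
  have hA := finrank_range_add_finrank_ker A.mulVecLin
  have hAT := finrank_range_add_finrank_ker Aᵀ.mulVecLin
  have hrank : Aᵀ.rank = A.rank := rank_transpose A
  unfold Matrix.rank at hrank
  omega

variable {K n : Type*} [Field K] [Fintype n] [DecidableEq n]

theorem adjugate_eq_zero_of_two_le_finrank_ker {A : Matrix n n K}
    (h : 2 ≤ finrank K (ker A.mulVecLin)) : A.adjugate = 0 := by
  ext i j
  -- a kernel vector vanishing at `i` also kills `A` with row `j` replaced by `eᵢ`
  obtain ⟨v, hvi, hv0⟩ : ∃ v ∈ ker (proj (R := K) (φ := fun _ : n ↦ K) i ∘ₗ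
      (ker A.mulVecLin).subtype), v ≠ 0 :=
    Submodule.exists_mem_ne_zero_of_ne_bot <| ker_ne_bot_of_finrank_lt <| by
      rw [finrank_self]; omega
  have hAv : A *ᵥ v = 0 := v.2
  have hvi : (v : n → K) i = 0 := hvi
  rw [adjugate_apply, zero_apply]
  refine exists_mulVec_eq_zero_iff.mp ⟨v, by simpa using hv0, ?_⟩
  rw [updateRow_mulVec, hAv, single_one_dotProduct, hvi, Function.update_eq_self_iff]
  rfl

theorem exists_adjugate_eq_smul_vecMulVec {A : Matrix n n K} {x w : n → K} (hx : x ≠ 0)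
    (hker : ker A.mulVecLin = K ∙ x) (hkerT : ker Aᵀ.mulVecLin = K ∙ w) :
    ∃ α : K, A.adjugate = α • vecMulVec x w := by
  have hAx : x ∈ ker A.mulVecLin := hker ▸ Submodule.mem_span_singleton_self x
  have hdet : A.det = 0 := exists_mulVec_eq_zero_iff.mp ⟨x, hx, hAx⟩
  -- the columns of `adj A` lie in `ker A`, since `A * adj A = det A • 1 = 0`
  have hcol : ∀ j, ∃ c : K, c • x = fun i ↦ A.adjugate i j := by
    intro j
    refine Submodule.mem_span_singleton.mp (hker ▸ ?_)
    ext k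
    simpa [mulVec, dotProduct, mul_apply, hdet] using congrFun₂ (mul_adjugate A) k j
  choose c hc using hcol
  have hadj : A.adjugate = vecMulVec x c := by
    ext i j
    simpa [vecMulVec_apply, mul_comm] using (congrFun (hc j) i).symm
  -- `adj A * A = 0` then puts `c` in the left kernel
  have hcA : c ᵥ* A = 0 := by
    have h0 : vecMulVec x (c ᵥ* A) = 0 := by
      rw [← vecMulVec_mul, ← hadj, adjugate_mul, hdet, zero_smul]
    exact (vecMulVec_eq_zero.mp h0).resolve_left hx
  obtain ⟨α, hα⟩ : ∃ α : K, α • w = c :=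
    Submodule.mem_span_singleton.mp (hkerT ▸ (by simpa [mulVec_transpose] using hcA))
  exact ⟨α, by rw [hadj, ← hα, vecMulVec_smul]⟩

theorem adjugate_ne_zero_of_ker_eq_span {A : Matrix n n K} {x w : n → K} (hx : x ≠ 0)
    (hker : ker A.mulVecLin = K ∙ x) (hw : w ≠ 0) (hwA : w ᵥ* A = 0) : A.adjugate ≠ 0 := by
  obtain ⟨k, hk⟩ : ∃ k, x k ≠ 0 := Function.ne_iff.mp hx
  obtain ⟨i, hi⟩ : ∃ i, w i ≠ 0 := Function.ne_iff.mp hw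
  -- `adj A k i` is the determinant of `A` with row `i` replaced by `eₖ`, which is injective
  intro h0
  obtain ⟨v, hv0, hv⟩ := exists_mulVec_eq_zero_iff.mpr
    (show (A.updateRow i (Pi.single k 1)).det = 0 by rw [← adjugate_apply, h0, zero_apply])
  rw [updateRow_mulVec, single_one_dotProduct] at hv
  have hvk : v k = 0 := by simpa using congrFun hv i
  have hAv_ne : ∀ j ≠ i, (A *ᵥ v) j = 0 := fun j hj ↦ by
    simpa [Function.update_of_ne hj] using congrFun hv j
  have hAv : A *ᵥ v = 0 := by
    have hsingle : A *ᵥ v = Pi.single i ((A *ᵥ v) i) := by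
      ext j
      rcases eq_or_ne j i with rfl | hj
      · simp
      · rw [hAv_ne j hj, Pi.single_eq_of_ne hj]
    have hpair : w i * (A *ᵥ v) i = 0 := by
      rw [← dotProduct_single, ← hsingle, dotProduct_mulVec, hwA, zero_dotProduct]
    rw [hsingle, (mul_eq_zero.mp hpair).resolve_left hi, Pi.single_zero]
  have hv_mem : v ∈ ker A.mulVecLin := hAv
  rw [hker] at hv_mem
  obtain ⟨a, rfl⟩ := Submodule.mem_span_singleton.mp hv_mem
  have ha : a = 0 := by simpa [hk] using hvk
  exact hv0 (by rw [ha, zero_smul])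

theorem exists_adjugate_eq_smul_vecMulVec_of_finrank_ker_eq_one {A : Matrix n n K}
    {x w : n → K} (h1 : finrank K (ker A.mulVecLin) = 1) (hx : x ≠ 0) (hAx : A *ᵥ x = 0)
    (hw : w ≠ 0) (hwA : w ᵥ* A = 0) : ∃ α : K, α ≠ 0 ∧ A.adjugate = α • vecMulVec x w := by
  have hker := Submodule.eq_span_singleton_of_finrank_eq_one h1 hAx hx
  have hkerT := Submodule.eq_span_singleton_of_finrank_eq_one
    (by rwa [finrank_ker_mulVecLin_transpose]) (by simpa [mulVec_transpose] using hwA) hw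
  obtain ⟨α, hα⟩ := exists_adjugate_eq_smul_vecMulVec hx hker hkerT
  refine ⟨α, fun hα0 ↦ adjugate_ne_zero_of_ker_eq_span hx hker hw hwA ?_, hα⟩
  rw [hα, hα0, zero_smul]

end Matrix

theorem algebraic_simplicity_characterization_general
    {n : ℕ} (T T' : ℂ → Matrix (Fin n) (Fin n) ℂ) (lam : ℂ)
    (hT' : ∀ i j, HasDerivAt (fun l => T l i j) (T' lam i j) lam)
    (x y : Fin n → ℂ) (hx : x ≠ 0) (hy : y ≠ 0)
    (hxe : (T lam).mulVec x = 0)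
    (hye : ((T lam).conjTranspose).mulVec y = 0) :
    ((T lam).det = 0 ∧ deriv (fun l => (T l).det) lam ≠ 0) ↔
      (Module.finrank ℂ (LinearMap.ker (T lam).mulVecLin) = 1 ∧
        dotProduct (star y) ((T' lam).mulVec x) ≠ 0) := by
  have hyT : star y ᵥ* T lam = 0 := by
    simpa [star_mulVec] using congrArg star hye
  have hadj := fun h1 ↦
    exists_adjugate_eq_smul_vecMulVec_of_finrank_ker_eq_one h1 hx hxe (star_ne_zero.mpr hy) hyT
  rw [(hasDerivAt_det hT').deriv]
  constructor
  · rintro ⟨-, hd⟩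
    have hpos : 0 < finrank ℂ (ker (T lam).mulVecLin) :=
      finrank_pos_iff_exists_ne_zero.mpr ⟨⟨x, hxe⟩, fun h ↦ hx (congrArg Subtype.val h)⟩
    have hlt : ¬ 2 ≤ finrank ℂ (ker (T lam).mulVecLin) := fun h2 ↦ hd <| by
      rw [adjugate_eq_zero_of_two_le_finrank_ker h2, Matrix.mul_zero, trace_zero]
    have h1 : finrank ℂ (ker (T lam).mulVecLin) = 1 := by omega
    obtain ⟨α, -, hα⟩ := hadj h1
    refine ⟨h1, fun hp ↦ hd ?_⟩
    rw [hα, trace_mul_smul_vecMulVec, hp, mul_zero]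
  · rintro ⟨h1, hp⟩
    obtain ⟨α, hα0, hα⟩ := hadj h1
    refine ⟨exists_mulVec_eq_zero_iff.mp ⟨x, hx, hxe⟩, ?_⟩
    rw [hα, trace_mul_smul_vecMulVec]
    exact mul_ne_zero hα0 hp

/-- for an eigentriplet `(ŷ, λ̂, x̂)` of a holomorphic matrix family `T`,
the eigenvalue `λ̂` is algebraically simple (simple zero of `det T`) iff it is
geometrically simple and `ŷ* T'(λ̂) x̂ ≠ 0`. -/
theorem algebraic_simplicity_characterization
    {n : ℕ} (T T' : ℂ → Matrix (Fin n) (Fin n) ℂ) (lam : ℂ)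
    (hT : ∀ i j, AnalyticAt ℂ (fun l => T l i j) lam)
    (hT' : ∀ i j, HasDerivAt (fun l => T l i j) (T' lam i j) lam)
    (x y : Fin n → ℂ) (hx : x ≠ 0) (hy : y ≠ 0)
    (hxe : (T lam).mulVec x = 0)
    (hye : ((T lam).conjTranspose).mulVec y = 0) :
    ((T lam).det = 0 ∧ deriv (fun l => (T l).det) lam ≠ 0) ↔
      (Module.finrank ℂ (LinearMap.ker (T lam).mulVecLin) = 1 ∧
        dotProduct (star y) ((T' lam).mulVec x) ≠ 0) :=
  algebraic_simplicity_characterization_general T T' lam hT' x y hx hy hxe hye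
end
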